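/- For every word x over {0,1,2} with |x| ≥ 4, there exists an infinite squarefree word over {0,1,2} that contains no occurrence of x as a subword. -/
import Mathlib


def Occurs (u w : List (Fin 3)) : Prop := u <:+: w

def SqFree (w : List (Fin 3)) : Prop :=
  ∀ x : List (Fin 3), x ≠ [] → ¬ Occurs (x ++ x) w

def OccursInf (u : List (Fin 3)) (w : ℕ → Fin 3) : Prop :=
  ∃ i : ℕ, u = (List.range u.length).map (fun j => w (i + j))

def SqFreeInf (w : ℕ → Fin 3) : Prop :=
  ∀ x : List (Fin 3), x ≠ [] → ¬ OccursInf (x ++ x) w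

def tm : ℕ → Bool := fun n =>
  if h : n = 0 then false else (tm (n / 2)).xor (n % 2 == 1)
decreasing_by exact Nat.div_lt_self (Nat.pos_of_ne_zero h) one_lt_two

lemma tm_zero : tm 0 = false := by rw [tm]; rfl

lemma tm_even (k : ℕ) : tm (2 * k) = tm k := by
  rcases Nat.eq_zero_or_pos k with rfl | hk
  · rfl
  · rw [tm]
    have h2 : ¬ (2 * k = 0) := by omega
    simp [h2, Nat.mul_div_cancel_left, Nat.mul_mod_right]

lemma tm_odd (k : ℕ) : tm (2 * k + 1) = !(tm k) := by
  rw [tm]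
  have h2 : ¬ (2 * k + 1 = 0) := by omega
  have h3 : (2 * k + 1) / 2 = k := by omega
  have h4 : (2 * k + 1) % 2 = 1 := by omega
  simp [h2, h3, h4, Bool.xor_true]

lemma tm_pair (k : ℕ) : tm (2 * k + 1) = !(tm (2 * k)) := by rw [tm_odd, tm_even]

lemma no_three (n : ℕ) (h1 : tm n = tm (n + 1)) (h2 : tm (n + 1) = tm (n + 2)) : False := by
  rcases Nat.even_or_odd n with ⟨k, hk⟩ | ⟨k, hk⟩
  · have h : n = 2 * k := by omega
    subst h
    rw [tm_pair k] at h1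
    simp at h1
  · have h : n + 1 = 2 * (k + 1) := by omega
    have h' : n + 2 = 2 * (k + 1) + 1 := by omega
    rw [h, h'] at h2
    rw [tm_pair (k+1)] at h2
    simp at h2

theorem tm_no_overlap : ∀ m, 1 ≤ m → ∀ i, ¬ (∀ j, j ≤ m → tm (i + j) = tm (i + j + m)) := by
  intro m
  induction m using Nat.strong_induction_on with
  | _ m IH =>
  intro hm i H
  rcases Nat.even_or_odd m with ⟨m', hm'⟩ | ⟨k, hk⟩
  · -- m = 2 * m', even
    have hmm : m = 2 * m' := by omega
    have hm'1 : 1 ≤ m' := by omega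
    apply IH m' (by omega) hm'1 (i / 2)
    intro j hj
    set a := i / 2 + j with ha
    by_cases hc : i ≤ 2 * a
    · have hp := H (2 * a - i) (by omega)
      rw [show i + (2 * a - i) = 2 * a from by omega] at hp
      rw [show 2 * a + m = 2 * (a + m') from by omega] at hp
      rwa [tm_even, tm_even] at hp
    · have hia : i = 2 * a + 1 := by omega
      have hp := H 0 (by omega)
      rw [show i + 0 = 2 * a + 1 from by omega] at hp
      rw [show 2 * a + 1 + m = 2 * (a + m') + 1 from by omega] at hp
      rw [tm_odd, tm_odd] at hp
      simpa using hp
  · -- m = 2k+1 odd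
    have hmk : m = 2 * k + 1 := by omega
    rcases Nat.eq_zero_or_pos k with rfl | hk1
    · -- m = 1 : three consecutive equal
      have h0 := H 0 (by omega)
      have h1 := H 1 (by omega)
      rw [show i + 0 + m = i + 1 from by omega, show i + 0 = i from by omega] at h0
      rw [show i + 1 + m = i + 2 from by omega] at h1
      exact no_three i h0 h1
    · -- k ≥ 1, m ≥ 3
      have ruleO : ∀ a, i ≤ 2 * a + 1 → 2 * a + 2 ≤ i + m → tm a = tm (a + 1) := by
        intro a h1 h2
        have hp1 := H (2 * a + 1 - i) (by omega)
        have hp2 := H (2 * a + 2 - i) (by omega)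
        rw [show i + (2 * a + 1 - i) = 2 * a + 1 from by omega,
            show 2 * a + 1 + m = 2 * (a + k + 1) from by omega] at hp1
        rw [show i + (2 * a + 2 - i) = 2 * (a + 1) from by omega,
            show 2 * (a + 1) + m = 2 * (a + k + 1) + 1 from by omega] at hp2
        rw [tm_odd, tm_even] at hp1
        rw [tm_even, tm_odd] at hp2
        rw [← hp1] at hp2
        simpa using hp2.symm
      have ruleE : ∀ a, i ≤ 2 * a → 2 * a + 1 ≤ i + m → tm (a + k) = tm (a + k + 1) := by
        intro a h1 h2
        have hp1 := H (2 * a - i) (by omega)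
        have hp2 := H (2 * a + 1 - i) (by omega)
        rw [show i + (2 * a - i) = 2 * a from by omega,
            show 2 * a + m = 2 * (a + k) + 1 from by omega] at hp1
        rw [show i + (2 * a + 1 - i) = 2 * a + 1 from by omega,
            show 2 * a + 1 + m = 2 * (a + k + 1) from by omega] at hp2
        rw [tm_even, tm_odd] at hp1
        rw [tm_odd, tm_even] at hp2
        rw [← hp2, hp1]
        simp
      rcases Nat.even_or_odd i with ⟨e, he⟩ | ⟨e, he⟩
      · -- i = 2e even
        have hie : i = 2 * e := by omega
        have E0 : tm e = tm (e + 1) := ruleO e (by omega) (by omega)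
        have E1 : tm (e + 1) = tm (e + 2) := by
          rcases Nat.lt_or_ge k 2 with hk2 | hk2
          · -- k = 1, use ruleE with a = e
            have hkk : k = 1 := by omega
            have := ruleE e (by omega) (by omega)
            rwa [hkk, show e + 1 + 1 = e + 2 from by omega] at this
          · have := ruleO (e + 1) (by omega) (by omega)
            rwa [show e + 1 + 1 = e + 2 from by omega] at this
        exact no_three e E0 E1
      · -- i = 2e+1 odd
        have hie : i = 2 * e + 1 := by omega
        have E0 : tm e = tm (e + 1) := ruleO e (by omega) (by omega)
        have E1 : tm (e + 1) = tm (e + 2) := by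
          have := ruleO (e + 1) (by omega) (by omega)
          rwa [show e + 1 + 1 = e + 2 from by omega] at this
        exact no_three e E0 E1

def tv (n : ℕ) : Fin 3 := if tm n = tm (n + 1) then 1 else if tm (n + 1) then 2 else 0

lemma occursInf_iff (u : List (Fin 3)) (w : ℕ → Fin 3) :
    (∃ i : ℕ, u = (List.range u.length).map (fun j => w (i + j))) ↔
      ∃ i, ∀ j (hj : j < u.length), u[j] = w (i + j) := by
  constructor
  · rintro ⟨i, hi⟩
    refine ⟨i, fun j hj => ?_⟩
    rw [List.getElem_of_eq hi]
    simp
  · rintro ⟨i, hp⟩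
    refine ⟨i, ?_⟩
    apply List.ext_getElem (by simp)
    intro j h1 h2
    simpa using (hp j h1)

lemma tv_key : ∀ b1 b2 b3 b4 : Bool,
    ((if b1 = b2 then (1 : Fin 3) else if b2 then 2 else 0) =
     (if b3 = b4 then (1 : Fin 3) else if b4 then 2 else 0)) →
    ((b1 = b2 ∧ b3 = b4) ∨ (b1 = b3 ∧ b2 = b4)) := by decide

lemma tv_eq_cases {p q : ℕ} (h : tv p = tv q) :
    (tm p = tm (p + 1) ∧ tm q = tm (q + 1)) ∨ (tm p = tm q ∧ tm (p + 1) = tm (q + 1)) :=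
  tv_key _ _ _ _ (by simpa [tv] using h)

lemma tv_one_key : ∀ b1 b2 : Bool,
    ((if b1 = b2 then (1 : Fin 3) else if b2 then 2 else 0) = 1) ↔ b1 = b2 := by decide

lemma tv_one_iff (n : ℕ) : tv n = 1 ↔ tm n = tm (n + 1) := by
  simpa [tv] using tv_one_key (tm n) (tm (n + 1))

theorem tv_sqfree' : ∀ x : List (Fin 3), x ≠ [] → ¬ (∃ i : ℕ,
    (x ++ x) = (List.range (x ++ x).length).map (fun j => tv (i + j))) := by
  intro x hx hocc
  rw [occursInf_iff] at hocc
  obtain ⟨i, hp⟩ := hocc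
  obtain ⟨m, hm⟩ : ∃ m, x.length = m := ⟨_, rfl⟩
  have hm1 : 1 ≤ m := by
    rw [← hm]
    exact List.length_pos_iff.mpr hx
  have K : ∀ j, j < m → tv (i + j) = tv (i + j + m) := by
    intro j hj
    have e1 : (x ++ x)[j]'(by simp [hm]; omega) = tv (i + j) := hp j (by simp [hm]; omega)
    have e2 : (x ++ x)[m + j]'(by simp [hm]; omega) = tv (i + (m + j)) :=
      hp (m + j) (by simp [hm]; omega)
    have e3 : (x ++ x)[j]'(by simp [hm]; omega) = x[j]'(by omega) :=
      List.getElem_append_left (by omega)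
    have e4 : (x ++ x)[m + j]'(by simp [hm]; omega) = x[j]'(by omega) := by
      rw [List.getElem_append_right (by omega)]
      simp only [hm, Nat.add_sub_cancel_left]
    rw [show i + j + m = i + (m + j) from by omega, ← e1, ← e2, e3, e4]
  by_cases hall : ∀ j, j < m → tv (i + j) = 1
  · have e0 : tm i = tm (i + 1) := by
      have h := hall 0 (by omega)
      rw [show i + 0 = i from by omega] at h
      exact (tv_one_iff i).mp h
    have e1 : tm (i + 1) = tm (i + 2) := by
      have h : tv (i + 1) = 1 := by
        by_cases h2 : 2 ≤ m
        · exact hall 1 (by omega)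
        · have hmm : m = 1 := by omega
          have h := K 0 (by omega)
          rw [show i + 0 + m = i + 1 from by omega, show i + 0 = i from by omega] at h
          have h0 := hall 0 (by omega)
          rw [show i + 0 = i from by omega] at h0
          rw [← h]
          exact h0
      have := (tv_one_iff (i + 1)).mp h
      rwa [show i + 1 + 1 = i + 2 from by omega] at this
    exact no_three i e0 e1
  · push_neg at hall
    obtain ⟨j0, hj0, hne⟩ := hall
    have base : tm (i + j0) = tm (i + j0 + m) := by
      rcases tv_eq_cases (K j0 hj0) with ⟨h1, h2⟩ | ⟨h1, h2⟩
      · exact absurd ((tv_one_iff (i + j0)).mpr h1) hne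
      · exact h1
    have step : ∀ j, j < m →
        ((tm (i + j) = tm (i + j + m)) ↔ (tm (i + j + 1) = tm (i + j + 1 + m))) := by
      intro j hj
      rcases tv_eq_cases (K j hj) with ⟨h1, h2⟩ | ⟨h1, h2⟩
      · rw [show i + j + 1 + m = i + j + m + 1 from by omega]
        constructor
        · intro h; rw [← h1, h, h2]
        · intro h; rw [h1, h, ← h2]
      · refine iff_of_true h1 ?_
        rw [show i + j + 1 + m = i + j + m + 1 from by omega]
        exact h2
    have up : ∀ d, j0 + d ≤ m → tm (i + (j0 + d)) = tm (i + (j0 + d) + m) := by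
      intro d
      induction d with
      | zero => intro _; simpa using base
      | succ d ih =>
        intro h
        have hd := ih (by omega)
        have hs := (step (j0 + d) (by omega)).mp hd
        rwa [show i + (j0 + d) + 1 = i + (j0 + (d + 1)) from by omega] at hs
    have down : ∀ d, d ≤ j0 → tm (i + (j0 - d)) = tm (i + (j0 - d) + m) := by
      intro d
      induction d with
      | zero => intro _; simpa using base
      | succ d ih =>
        intro h
        have hd := ih (by omega)
        have hs := step (j0 - (d + 1)) (by omega)
        apply hs.mpr
        rwa [show i + (j0 - (d + 1)) + 1 = i + (j0 - d) from by omega]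
    have D : ∀ j, j ≤ m → tm (i + j) = tm (i + j + m) := by
      intro j hj
      rcases le_or_gt j0 j with h | h
      · have := up (j - j0) (by omega)
        rwa [show j0 + (j - j0) = j from by omega] at this
      · have := down (j0 - j) (by omega)
        rwa [show j0 - (j0 - j) = j from by omega] at this
    exact tm_no_overlap m hm1 i D


lemma tv_sqfree : SqFreeInf tv := tv_sqfree'

lemma occursInf_iff' (u : List (Fin 3)) (w : ℕ → Fin 3) :
    OccursInf u w ↔ ∃ i, ∀ j (hj : j < u.length), u[j] = w (i + j) :=
  occursInf_iff u w

lemma occursInf_of_infix {u x : List (Fin 3)} {w : ℕ → Fin 3}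
    (hux : u <:+: x) (h : OccursInf x w) : OccursInf u w := by
  obtain ⟨s, r, rfl⟩ := hux
  rw [occursInf_iff'] at h ⊢
  obtain ⟨i, hp⟩ := h
  refine ⟨i + s.length, fun j hj => ?_⟩
  have hj' : s.length + j < (s ++ u ++ r).length := by simp; omega
  have h2 := hp (s.length + j) hj'
  have e : (s ++ u ++ r)[s.length + j]'hj' = u[j]'hj := by
    rw [List.getElem_append_left (by simp; omega)]
    rw [List.getElem_append_right (by omega)]
    simp only [Nat.add_sub_cancel_left]
  rw [e] at h2
  rw [h2, show i + (s.length + j) = i + s.length + j from by omega]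

lemma occursInf_map {u : List (Fin 3)} {w : ℕ → Fin 3} {f g : Fin 3 → Fin 3}
    (hgf : ∀ k, g (f k) = k) (h : OccursInf u (fun n => f (w n))) :
    OccursInf (u.map g) w := by
  rw [occursInf_iff'] at h ⊢
  obtain ⟨i, hp⟩ := h
  refine ⟨i, fun j hj => ?_⟩
  have hj' : j < u.length := by simpa using hj
  have h2 := hp j hj'
  rw [List.getElem_map, h2]
  exact hgf _

lemma sqFreeInf_comp {f g : Fin 3 → Fin 3} (hgf : ∀ k, g (f k) = k) {w : ℕ → Fin 3}
    (hw : SqFreeInf w) : SqFreeInf (fun n => f (w n)) := by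
  intro x hx hocc
  apply hw (x.map g) (by simpa using hx)
  have h2 := occursInf_map hgf hocc
  rwa [List.map_append] at h2

lemma not_occursInf_comp {p x : List (Fin 3)} {w : ℕ → Fin 3} {f g : Fin 3 → Fin 3}
    (hgf : ∀ k, g (f k) = k) (hpx : (p.map f) <:+: x) (hp : ¬ OccursInf p w) :
    ¬ OccursInf x (fun n => f (w n)) := by
  intro h
  apply hp
  have h1 := occursInf_of_infix hpx h
  have h2 := occursInf_map hgf h1
  rwa [List.map_map, show g ∘ f = id from funext hgf, List.map_id] at h2

lemma tv_zero_key : ∀ b1 b2 : Bool,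
    ((if b1 = b2 then (1 : Fin 3) else if b2 then 2 else 0) = 0) ↔ (b1 = true ∧ b2 = false) := by
  decide

lemma tv_two_key : ∀ b1 b2 : Bool,
    ((if b1 = b2 then (1 : Fin 3) else if b2 then 2 else 0) = 2) ↔ (b1 = false ∧ b2 = true) := by
  decide

lemma tv_zero_iff (n : ℕ) : tv n = 0 ↔ (tm n = true ∧ tm (n + 1) = false) := by
  simpa [tv] using tv_zero_key (tm n) (tm (n + 1))

lemma tv_two_iff (n : ℕ) : tv n = 2 ↔ (tm n = false ∧ tm (n + 1) = true) := by
  simpa [tv] using tv_two_key (tm n) (tm (n + 1))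

lemma tv_avoid_010 : ¬ OccursInf ([0, 1, 0] : List (Fin 3)) tv := by
  rintro ⟨i, h⟩
  simp [List.range_succ] at h
  obtain ⟨h0, h1, h2⟩ := h
  obtain ⟨a0, a1⟩ := (tv_zero_iff i).mp h0.symm
  have b1 := (tv_one_iff (i + 1)).mp h1.symm
  obtain ⟨c0, c1⟩ := (tv_zero_iff (i + 2)).mp h2.symm
  rw [show i + 1 + 1 = i + 2 from by omega] at b1
  rw [a1] at b1
  rw [c0] at b1
  exact Bool.false_ne_true b1

lemma tv_avoid_1021 : ¬ OccursInf ([1, 0, 2, 1] : List (Fin 3)) tv := by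
  rintro ⟨i, h⟩
  simp [List.range_succ] at h
  obtain ⟨h0, h1, h2, h3⟩ := h
  have b0 := (tv_one_iff i).mp h0.symm
  obtain ⟨a0, a1⟩ := (tv_zero_iff (i + 1)).mp h1.symm
  obtain ⟨c0, c1⟩ := (tv_two_iff (i + 2)).mp h2.symm
  have b3 := (tv_one_iff (i + 3)).mp h3.symm
  rw [show i + 1 + 1 = i + 2 from by omega] at a1
  rw [show i + 2 + 1 = i + 3 from by omega] at c1
  rw [show i + 3 + 1 = i + 4 from by omega] at b3
  -- tm i = true, tm (i+1) = true, tm (i+3) = true, tm (i+4) = true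
  have t0 : tm i = true := by rw [b0]; exact a0
  rcases Nat.even_or_odd i with ⟨e, he⟩ | ⟨e, he⟩
  · have hie : i = 2 * e := by omega
    have := tm_pair e
    rw [← hie] at this
    rw [a0, t0] at this
    simp at this
  · have h3' : i + 3 = 2 * (e + 2) := by omega
    have h4' : i + 4 = 2 * (e + 2) + 1 := by omega
    have := tm_pair (e + 2)
    rw [← h3', show i + 3 + 1 = i + 4 from by omega] at this
    rw [← b3, c1] at this
    simp at this

def pfn (a b : Fin 3) : Fin 3 → Fin 3 := fun k =>
  if k = 0 then a else if k = 1 then b else ⟨(3 - a.val - b.val) % 3, Nat.mod_lt _ (by omega)⟩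

def gfn (a b : Fin 3) : Fin 3 → Fin 3 := fun k => if k = a then 0 else if k = b then 1 else 2

lemma pfn_inv : ∀ a b : Fin 3, a ≠ b → ∀ k, gfn a b (pfn a b k) = k := by decide

lemma pfn_zero : ∀ a b : Fin 3, pfn a b 0 = a := by decide

lemma pfn_one : ∀ a b : Fin 3, pfn a b 1 = b := by decide

lemma pfn_third : ∀ a b c : Fin 3, a ≠ b → b ≠ c → a ≠ c → pfn a b 2 = c := by decide

lemma fin3_last : ∀ a b c d : Fin 3, a ≠ b → b ≠ c → ¬(a = c) → c ≠ d → ¬(b = d) → d = a := by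
  decide

theorem avoid_any_word_length_ge_four (x : List (Fin 3)) (hx : 4 ≤ x.length) :
    ∃ w : ℕ → Fin 3, SqFreeInf w ∧ ¬ OccursInf x w := by
  by_cases hsq : ∃ y : List (Fin 3), y ≠ [] ∧ (y ++ y) <:+: x
  · obtain ⟨y, hy, hyx⟩ := hsq
    exact ⟨tv, tv_sqfree, fun h => tv_sqfree y hy (occursInf_of_infix hyx h)⟩
  · push_neg at hsq
    match x, hx with
    | a :: b :: c :: d :: r, hx =>
    have hab : a ≠ b := by
      intro h
      exact hsq [a] (by simp) ⟨[], c :: d :: r, by simp [h]⟩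
    have hbc : b ≠ c := by
      intro h
      exact hsq [b] (by simp) ⟨[a], d :: r, by simp [h]⟩
    have hcd : c ≠ d := by
      intro h
      exact hsq [c] (by simp) ⟨[a, b], r, by simp [h]⟩
    by_cases hac : a = c
    · refine ⟨fun n => pfn a b (tv n), sqFreeInf_comp (pfn_inv a b hab) tv_sqfree, ?_⟩
      refine not_occursInf_comp (pfn_inv a b hab) (p := [0, 1, 0]) ?_ tv_avoid_010
      refine ⟨[], d :: r, ?_⟩
      simp [pfn_zero, pfn_one, hac]
    · by_cases hbd : b = d
      · refine ⟨fun n => pfn b c (tv n), sqFreeInf_comp (pfn_inv b c hbc) tv_sqfree, ?_⟩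
        refine not_occursInf_comp (pfn_inv b c hbc) (p := [0, 1, 0]) ?_ tv_avoid_010
        refine ⟨[a], r, ?_⟩
        simp [pfn_zero, pfn_one, hbd]
      · have hda : d = a := fin3_last a b c d hab hbc hac hcd hbd
        have hba : b ≠ a := fun h => hab h.symm
        refine ⟨fun n => pfn b a (tv n), sqFreeInf_comp (pfn_inv b a hba) tv_sqfree, ?_⟩
        refine not_occursInf_comp (pfn_inv b a hba) (p := [1, 0, 2, 1]) ?_ tv_avoid_1021
        refine ⟨[], r, ?_⟩
        have h2 : pfn b a 2 = c := pfn_third b a c hba hac hbc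
        simp [pfn_zero, pfn_one, h2, hda]
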